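/- Let X be a dense in itself metric space and let Q be a dense subset of X. Then cof(nwd_Q) = cof(nwd_X), where nwd_Q is the family of nowhere dense subsets of the subspace Q and nwd_X is the family of nowhere dense subsets of X. -/

import Mathlib

open Topology Set

universe u

/-- The cofinality of the ideal of nowhere dense subsets of `Z`: the least cardinality
of a family of nowhere dense sets such that every nowhere dense subset of `Z` is
contained in a member of the family. -/
noncomputable def cofNwd (Z : Type u) [TopologicalSpace Z] : Cardinal.{u} :=
  sInf {c : Cardinal.{u} | ∃ W : Set (Set Z), Cardinal.mk W = c ∧
    (∀ s ∈ W, IsNowhereDense s) ∧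
    ∀ F : Set Z, IsNowhereDense F → ∃ s ∈ W, F ⊆ s}

/-
Restriction to `Q` (preimage) and pushing forward to `X` (closure of the image) both preserve
nowhere density when `Q` is dense, so cofinal families transfer in both directions once every
nowhere dense `F ⊆ X` is shown to lie in the closure of a nowhere dense set of points of `Q`.
For that, pick for each `n` a maximal `1/(n+1)`-separated set `Eₙ` of points of `Q` within
`1/(n+1)` of `F`. Each `Eₙ` is closed and discrete, hence nowhere dense as `X` has no isolated
points; their union accumulates at every point of `F`, and away from `closure F` only finitely
many `Eₙ` occur locally, so the union is still nowhere dense.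
-/

open Filter Metric

section NowhereDense

variable {Z : Type*} [TopologicalSpace Z]

theorem IsNowhereDense.union {s t : Set Z}
    (hs : IsNowhereDense s) (ht : IsNowhereDense t) : IsNowhereDense (s ∪ t) := by
  obtain ⟨hso, hsd⟩ := isClosed_isNowhereDense_iff_compl.mp ⟨isClosed_closure, hs.closure⟩
  obtain ⟨hto, htd⟩ := isClosed_isNowhereDense_iff_compl.mp ⟨isClosed_closure, ht.closure⟩
  have hst : IsNowhereDense (closure s ∪ closure t) :=
    (isClosed_isNowhereDense_iff_compl.mpr
      ⟨compl_union .. ▸ hso.inter hto, compl_union .. ▸ hsd.inter_of_isOpen_left htd hso⟩).2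
  exact hst.mono (union_subset_union subset_closure subset_closure)

theorem Set.Finite.isNowhereDense_biUnion {ι : Type*} {I : Set ι}
    (hI : I.Finite) {s : ι → Set Z} (hs : ∀ i ∈ I, IsNowhereDense (s i)) :
    IsNowhereDense (⋃ i ∈ I, s i) := by
  induction I, hI using Set.Finite.induction_on with
  | empty => simp
  | insert _ _ ih =>
    rw [biUnion_insert]
    exact (hs _ (mem_insert ..)).union (ih fun i hi => hs i (mem_insert_of_mem _ hi))

theorem isNowhereDense_of_locally_off {D S : Set Z}
    (hD : IsNowhereDense D) (hloc : ∀ z ∉ closure D, ∃ U ∈ 𝓝 z, IsNowhereDense (S ∩ U)) :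
    IsNowhereDense S := by
  refine eq_empty_of_forall_notMem fun x hx => ?_
  obtain ⟨z, hzS, hzD⟩ : (interior (closure S) \ closure D).Nonempty := by
    by_contra h
    rw [not_nonempty_iff_eq_empty, sdiff_eq_empty] at h
    exact (hD ▸ interior_maximal h isOpen_interior hx : x ∈ (∅ : Set Z))
  obtain ⟨U, hU, hSU⟩ := hloc z hzD
  have hsub : interior (closure S) ∩ interior U ⊆ closure (S ∩ U) := calc
    _ ⊆ closure S ∩ interior U := inter_subset_inter_left _ interior_subset
    _ ⊆ closure (S ∩ interior U) := isOpen_interior.closure_inter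
    _ ⊆ closure (S ∩ U) := closure_mono (inter_subset_inter_right _ interior_subset)
  have := interior_maximal hsub (isOpen_interior.inter isOpen_interior)
    ⟨hzS, mem_interior_iff_mem_nhds.mpr hU⟩
  rwa [hSU] at this

end NowhereDense

section Subspace

variable {X : Type*} [TopologicalSpace X] {Q : Set X}

theorem Dense.isNowhereDense_of_image_val (hQ : Dense Q) {s : Set Q}
    (hs : IsNowhereDense (Subtype.val '' s)) : IsNowhereDense s := by
  refine eq_empty_of_forall_notMem fun x hx => ?_
  obtain ⟨V, hV, hVs⟩ := isOpen_induced_iff.mp (isOpen_interior (s := closure s))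
  have hVQ : V ∩ Q ⊆ closure (Subtype.val '' s) := by
    rintro y ⟨hyV, hyQ⟩
    have hy : (⟨y, hyQ⟩ : Q) ∈ closure s := interior_subset (hVs ▸ hyV)
    exact image_closure_subset_closure_image continuous_subtype_val ⟨_, hy, rfl⟩
  have hVsub : V ⊆ closure (Subtype.val '' s) :=
    (hQ.open_subset_closure_inter hV).trans (closure_minimal hVQ isClosed_closure)
  have hxV : (x : X) ∈ V := by rw [← mem_preimage, hVs]; exact hx
  have := interior_maximal hVsub hV hxV
  rwa [hs] at this

theorem Dense.isNowhereDense_preimage_val (hQ : Dense Q) {t : Set X} (ht : IsNowhereDense t) :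
    IsNowhereDense (Subtype.val ⁻¹' t : Set Q) :=
  hQ.isNowhereDense_of_image_val (ht.mono (image_preimage_subset _ _))

end Subspace

section Metric

variable {X : Type*} [MetricSpace X]

theorem exists_separated_net (A : Set X) {ε : ℝ} (hε : 0 < ε) :
    ∃ E ⊆ A, E.Pairwise (ε ≤ dist · ·) ∧ ∀ a ∈ A, ∃ e ∈ E, dist a e < ε := by
  obtain ⟨E, -, hE⟩ := zorn_subset_nonempty {E | E ⊆ A ∧ E.Pairwise (ε ≤ dist · ·)}
    (fun c hcS hc _ => ⟨⋃₀ c, ⟨sUnion_subset fun s hs => (hcS hs).1,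
      (pairwise_sUnion hc.directedOn).mpr fun s hs => (hcS hs).2⟩,
      fun _ => subset_sUnion_of_mem⟩) ∅ ⟨empty_subset _, pairwise_empty _⟩
  refine ⟨E, hE.prop.1, hE.prop.2, fun a ha => ?_⟩
  by_contra! hfar
  have haE : a ∉ E := fun haE => (hfar a haE).not_gt (by simpa using hε)
  have hins : insert a E ⊆ E := hE.2 ⟨insert_subset ha hE.prop.1,
    hE.prop.2.insert fun e he _ => ⟨hfar e he, dist_comm a e ▸ hfar e he⟩⟩ (subset_insert a E)
  exact haE (hins (mem_insert a E))

theorem isNowhereDense_of_pairwise_le_dist (hX : ∀ x : X, ¬IsOpen ({x} : Set X)) {s : Set X}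
    {ε : ℝ} (hε : 0 < ε) (hs : s.Pairwise (ε ≤ dist · ·)) : IsNowhereDense s := by
  rw [(isClosed_of_pairwise_le_dist hε hs).isNowhereDense_iff]
  refine eq_empty_of_forall_notMem fun x hx => hX x ?_
  have hU : IsOpen (interior s ∩ ball x (ε / 2)) := isOpen_interior.inter isOpen_ball
  have hsingle : interior s ∩ ball x (ε / 2) = {x} := by
    refine Subsingleton.eq_singleton_of_mem (fun y hy z hz => ?_)
      ⟨hx, mem_ball_self (by positivity)⟩
    by_contra hyz
    have := hs (interior_subset hy.1) (interior_subset hz.1) hyz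
    linarith [dist_triangle_right y z x, mem_ball.mp hy.2, mem_ball.mp hz.2]
  exact hsingle ▸ hU

theorem isNowhereDense_iUnion_of_infDist_le {D : Set X} (hD : IsNowhereDense D)
    (hDne : D.Nonempty) {ε : ℕ → ℝ} (hε : Tendsto ε atTop (𝓝 0)) {E : ℕ → Set X}
    (hE : ∀ n, IsNowhereDense (E n)) (hED : ∀ n, ∀ e ∈ E n, infDist e D ≤ ε n) :
    IsNowhereDense (⋃ n, E n) := by
  refine isNowhereDense_of_locally_off hD fun z hz => ?_
  have hr : 0 < infDist z D / 2 := half_pos ((infDist_pos_iff_notMem_closure hDne).mp hz)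
  have hfin : {n | ¬ε n < infDist z D / 2}.Finite := by
    rw [← eventually_cofinite, Nat.cofinite_eq_atTop]
    exact hε.eventually (gt_mem_nhds hr)
  refine ⟨ball z (infDist z D / 2), ball_mem_nhds z hr,
    (hfin.isNowhereDense_biUnion fun n _ => hE n).mono ?_⟩
  rintro e ⟨he, hez⟩
  obtain ⟨n, hn⟩ := mem_iUnion.mp he
  refine mem_biUnion (fun hlt => ?_) hn
  linarith [hED n e hn, infDist_le_infDist_add_dist (x := z) (y := e) (s := D),
    dist_comm z e, mem_ball.mp hez]

theorem subset_closure_iUnion_of_infDist_le {Q : Set X} (hQ : Dense Q) {D : Set X}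
    {ε : ℕ → ℝ} (hε : Tendsto ε atTop (𝓝 0)) (hεpos : ∀ n, 0 < ε n) {E : ℕ → Set X}
    (hnet : ∀ n, ∀ q ∈ Q, infDist q D ≤ ε n → ∃ e ∈ E n, dist q e < ε n) :
    D ⊆ closure (⋃ n, E n) := by
  refine fun x hx => Metric.mem_closure_iff.mpr fun δ hδ => ?_
  obtain ⟨n, hn⟩ := (hε.eventually (gt_mem_nhds (half_pos hδ))).exists
  obtain ⟨q, hqQ, hxq⟩ := hQ.exists_dist_lt x (hεpos n)
  have hqD : infDist q D ≤ ε n :=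
    (infDist_le_dist_of_mem hx).trans (dist_comm q x ▸ hxq.le)
  obtain ⟨e, he, hqe⟩ := hnet n q hqQ hqD
  exact ⟨e, mem_iUnion_of_mem n he, by linarith [dist_triangle x q e]⟩

theorem exists_isNowhereDense_subset_closure (hX : ∀ x : X, ¬IsOpen ({x} : Set X))
    {Q : Set X} (hQ : Dense Q) {F : Set X} (hF : IsNowhereDense F) :
    ∃ E ⊆ Q, IsNowhereDense E ∧ F ⊆ closure E := by
  rcases F.eq_empty_or_nonempty with rfl | hFne
  · exact ⟨∅, empty_subset _, isNowhereDense_empty, empty_subset _⟩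
  set ε : ℕ → ℝ := fun n => 1 / (n + 1)
  have hεpos : ∀ n, 0 < ε n := fun n => Nat.one_div_pos_of_nat
  have hε : Tendsto ε atTop (𝓝 0) := tendsto_one_div_add_atTop_nhds_zero_nat
  choose E hEA hEsep hEnet using fun n =>
    exists_separated_net {q ∈ Q | infDist q F ≤ ε n} (hεpos n)
  refine ⟨⋃ n, E n, iUnion_subset fun n => (hEA n).trans (sep_subset _ _), ?_,
    subset_closure_iUnion_of_infDist_le hQ hε hεpos fun n q hq hqF => hEnet n q ⟨hq, hqF⟩⟩
  exact isNowhereDense_iUnion_of_infDist_le hF hFne hε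
    (fun n => isNowhereDense_of_pairwise_le_dist hX (hεpos n) (hEsep n))
    fun n e he => (hEA n he).2

end Metric

theorem cofNwd_le_of_monotone {Y Z : Type u} [TopologicalSpace Y] [TopologicalSpace Z]
    (φ : Set Y → Set Z) (hφ : Monotone φ) (hnwd : ∀ s, IsNowhereDense s → IsNowhereDense (φ s))
    (hcover : ∀ F, IsNowhereDense F → ∃ s, IsNowhereDense s ∧ F ⊆ φ s) :
    cofNwd Z ≤ cofNwd Y := by
  refine le_csInf
    ⟨_, {s | IsNowhereDense s}, rfl, fun s hs => hs, fun F hF => ⟨F, hF, subset_rfl⟩⟩ ?_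
  rintro _ ⟨W, rfl, hWnwd, hWcof⟩
  calc cofNwd Z ≤ Cardinal.mk (φ '' W) := csInf_le' ⟨φ '' W, rfl, ?_, fun F hF => ?_⟩
    _ ≤ Cardinal.mk W := Cardinal.mk_image_le
  · rintro _ ⟨s, hs, rfl⟩
    exact hnwd s (hWnwd s hs)
  · obtain ⟨s, hs, hFs⟩ := hcover F hF
    obtain ⟨t, htW, hst⟩ := hWcof s hs
    exact ⟨φ t, mem_image_of_mem φ htW, hFs.trans (hφ hst)⟩

/-- If `X` is a dense in itself metric space and `Q` is a dense subset of `X`, then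
`cof(nwd_Q) = cof(nwd_X)`, where `Q` carries the subspace topology. -/
theorem cofNwd_dense_subspace {X : Type u} [MetricSpace X]
    (hdii : ∀ x : X, ¬ IsOpen ({x} : Set X))
    (Q : Set X) (hQ : Dense Q) :
    cofNwd Q = cofNwd X := by
  apply le_antisymm
  · exact cofNwd_le_of_monotone (Subtype.val ⁻¹' ·) (fun _ _ h => preimage_mono h)
      (fun _ => hQ.isNowhereDense_preimage_val)
      fun s hs => ⟨_, hs.image_val, subset_preimage_image _ _⟩
  · refine cofNwd_le_of_monotone (fun s => closure (Subtype.val '' s))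
      (fun _ _ h => closure_mono (image_mono h)) (fun _ hs => hs.image_val.closure)
      fun F hF => ?_
    obtain ⟨E, hEQ, hE, hFE⟩ := exists_isNowhereDense_subset_closure hdii hQ hF
    refine ⟨Subtype.val ⁻¹' E, hQ.isNowhereDense_preimage_val hE, ?_⟩
    rwa [Subtype.image_preimage_coe, inter_eq_right.mpr hEQ]
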